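/- If S is a unilateral weighted shift with positive bounded weights such that m(S) = w(S) (lower bound equals numerical radius), then S possesses Bishop's property (β). -/

import Mathlib

open Filter

section Defs

variable {X : Type*} [NormedAddCommGroup X] [NormedSpace ℂ X]

/-- `T` possesses Bishop's property (β). -/
def HasBishopBeta (T : X →L[ℂ] X) : Prop :=
  ∀ U : Set ℂ, IsOpen U →
    ∀ f : ℕ → ℂ → X, (∀ n, AnalyticOnNhd ℂ (f n) U) →
      (∀ K : Set ℂ, K ⊆ U → IsCompact K →
        TendstoUniformlyOn (fun n z => (T - z • (1 : X →L[ℂ] X)) (f n z)) 0 atTop K) →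
      ∀ K : Set ℂ, K ⊆ U → IsCompact K →
        TendstoUniformlyOn (fun n z => f n z) 0 atTop K

/-- The lower bound `m(T) = inf {‖T x‖ : ‖x‖ = 1}` of an operator `T`. -/
noncomputable def lowerBound (T : X →L[ℂ] X) : ℝ :=
  sInf ((fun x => ‖T x‖) '' Metric.sphere (0 : X) 1)

end Defs

variable {H : Type*} [NormedAddCommGroup H] [InnerProductSpace ℂ H] [CompleteSpace H]

/-- The numerical radius `w(T) = sup {|⟨T x, x⟩| : ‖x‖ = 1}`. -/
noncomputable def numericalRadius (T : H →L[ℂ] H) : ℝ :=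
  sSup ((fun x => ‖(inner ℂ (T x) x : ℂ)‖) '' Metric.sphere (0 : H) 1)

/-!
If `m(T) = w(T) = t`, then for `‖x‖ = 1` both `‖(T - z) x‖ ≥ ‖T x‖ - |z| ≥ t - |z|` and
`‖(T - z) x‖ ≥ |⟨(T - z) x, x⟩| ≥ |z| - t`, so `| |z| - t | ‖x‖ ≤ ‖(T - z) x‖` for all `z`.
For a weighted shift `t > 0`, as testing `w(S)` on `e₀ + e₁` shows.
If `(T - z) fₙ(z) → 0` locally uniformly, this estimate gives `fₙ → 0` away from the circle
`|z| = t`. Near the circle, apply the maximum modulus principle on a disc `|z - c| ≤ s` to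
`q(z) fₙ(z)`, where `q` is a quadratic polynomial with `|q(z)| = s | |z|² - t² |` on `|z - c| = s`
and `q(c) = s² c`.
-/

section LowerEstimate

variable {E : Type*} [NormedAddCommGroup E]

theorem lowerBound_mul_norm_le [NormedSpace ℂ E] (T : E →L[ℂ] E) (x : E) :
    lowerBound T * ‖x‖ ≤ ‖T x‖ := by
  rcases eq_or_ne x 0 with rfl | hx
  · simp
  have hx₀ : 0 < ‖x‖ := norm_pos_iff.mpr hx
  have hle : lowerBound T ≤ ‖T ((‖x‖⁻¹ : ℂ) • x)‖ :=
    csInf_le ⟨0, by rintro _ ⟨y, -, rfl⟩; positivity⟩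
      ⟨_, mem_sphere_zero_iff_norm.mpr (norm_smul_inv_norm hx), rfl⟩
  rw [map_smul, norm_smul, norm_inv, Complex.norm_real, Real.norm_of_nonneg hx₀.le] at hle
  rwa [← le_div_iff₀ hx₀, div_eq_inv_mul]

variable [InnerProductSpace ℂ E]

theorem norm_inner_le_numericalRadius_mul_sq (T : E →L[ℂ] E) (x : E) :
    ‖inner ℂ (T x) x‖ ≤ numericalRadius T * ‖x‖ ^ 2 := by
  rcases eq_or_ne x 0 with rfl | hx
  · simp
  have hx₀ : 0 < ‖x‖ := norm_pos_iff.mpr hx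
  have hbdd : BddAbove ((fun y => ‖inner ℂ (T y) y‖) '' Metric.sphere (0 : E) 1) := by
    refine ⟨‖T‖, ?_⟩
    rintro _ ⟨y, hy, rfl⟩
    rw [mem_sphere_zero_iff_norm] at hy
    simpa [hy] using (norm_inner_le_norm (𝕜 := ℂ) (T y) y).trans
      (mul_le_mul_of_nonneg_right (T.le_opNorm y) (norm_nonneg y))
  have hle : ‖inner ℂ (T ((‖x‖⁻¹ : ℂ) • x)) ((‖x‖⁻¹ : ℂ) • x)‖ ≤ numericalRadius T :=
    le_csSup hbdd ⟨_, mem_sphere_zero_iff_norm.mpr (norm_smul_inv_norm hx), rfl⟩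
  rw [map_smul, inner_smul_left, inner_smul_right, norm_mul, norm_mul, RCLike.norm_conj,
    norm_inv, Complex.norm_real, Real.norm_of_nonneg hx₀.le, ← mul_assoc, ← mul_inv] at hle
  rwa [← sq, inv_mul_le_iff₀ (by positivity), mul_comm] at hle

theorem abs_norm_sub_lowerBound_mul_norm_le {T : E →L[ℂ] E}
    (hT : lowerBound T = numericalRadius T) (z : ℂ) (x : E) :
    |‖z‖ - lowerBound T| * ‖x‖ ≤ ‖T x - z • x‖ := by
  have hinside : (lowerBound T - ‖z‖) * ‖x‖ ≤ ‖T x - z • x‖ := by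
    have := norm_le_norm_add_norm_sub' (T x) (z • x)
    rw [norm_smul] at this
    linarith [lowerBound_mul_norm_le T x]
  have houtside : (‖z‖ - lowerBound T) * ‖x‖ ^ 2 ≤ ‖T x - z • x‖ * ‖x‖ := by
    have hsplit : inner ℂ (z • x) x = inner ℂ (T x) x - inner ℂ (T x - z • x) x := by
      rw [inner_sub_left]; ring
    have := norm_sub_le (inner ℂ (T x) x) (inner ℂ (T x - z • x) x)
    rw [← hsplit, inner_smul_left, inner_self_eq_norm_sq_to_K, norm_mul, RCLike.norm_conj,
      norm_pow, RCLike.norm_ofReal, abs_norm] at this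
    rw [hT]
    nlinarith [norm_inner_le_numericalRadius_mul_sq T x,
      norm_inner_le_norm (𝕜 := ℂ) (T x - z • x) x]
  have houtside' : (‖z‖ - lowerBound T) * ‖x‖ ≤ ‖T x - z • x‖ := by
    rcases (norm_nonneg x).eq_or_lt with hx | hx
    · rw [← hx]; simp
    · nlinarith
  rw [← abs_norm x, ← abs_mul]
  exact abs_le.mpr ⟨by linarith, houtside'⟩

end LowerEstimate

section WeightedShift

variable {E : Type*} [NormedAddCommGroup E] [InnerProductSpace ℂ E]

theorem abs_weight_zero_le_two_mul_numericalRadius {S : E →L[ℂ] E} {e : ℕ → E}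
    (he : Orthonormal ℂ e) {ω : ℕ → ℝ} (hS : ∀ n, S (e n) = (ω n : ℂ) • e (n + 1)) :
    |ω 0| ≤ 2 * numericalRadius S := by
  have hinner : inner ℂ (S (e 0 + e 1)) (e 0 + e 1) = (ω 0 : ℂ) := by
    simp only [map_add, hS, inner_add_left, inner_add_right, inner_smul_left,
      he.inner_eq_zero (by decide : (1 : ℕ) ≠ 0), he.inner_eq_zero (by decide : (2 : ℕ) ≠ 0),
      he.inner_eq_zero (by decide : (2 : ℕ) ≠ 1), inner_self_eq_norm_sq_to_K, he.1 1]
    simp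
  have hnorm : ‖e 0 + e 1‖ ^ 2 = 2 := by
    rw [norm_add_sq (𝕜 := ℂ), he.inner_eq_zero (by decide), he.1 0, he.1 1]
    norm_num
  have := norm_inner_le_numericalRadius_mul_sq S (e 0 + e 1)
  rwa [hinner, hnorm, Complex.norm_real, Real.norm_eq_abs, mul_comm] at this

end WeightedShift

section PropertyBeta

open ComplexConjugate Metric

variable {X : Type*} [NormedAddCommGroup X] [NormedSpace ℂ X]

/-- On the circle `|z - c| = s` one has `z̄ = c̄ + s² / (z - c)`, so this quadratic polynomial
agrees there with `(z - c) (|z|² - t²)`. -/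
theorem norm_quadratic_eq_mul_abs_norm_sq_sub_sq {c z : ℂ} {s : ℝ} (t : ℝ)
    (hz : z ∈ sphere c s) :
    ‖conj c * z * (z - c) + s ^ 2 * z - t ^ 2 * (z - c)‖ = s * |‖z‖ ^ 2 - t ^ 2| := by
  rw [mem_sphere, dist_eq_norm] at hz
  have hcircle : (z - c) * (conj z - conj c) = (s : ℂ) ^ 2 := by
    rw [← map_sub, RCLike.mul_conj, hz]; rfl
  have hz' : z * conj z = (‖z‖ : ℂ) ^ 2 := RCLike.mul_conj z
  have hfactor : conj c * z * (z - c) + s ^ 2 * z - t ^ 2 * (z - c)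
      = (z - c) * (((‖z‖ ^ 2 - t ^ 2 : ℝ)) : ℂ) := by
    push_cast
    linear_combination (-z) * hcircle + (z - c) * hz'
  rw [hfactor, norm_mul, hz, Complex.norm_real, Real.norm_eq_abs]

theorem mul_norm_mul_norm_le_of_forall_mem_sphere {f : ℂ → X} {c : ℂ} {s t ε : ℝ}
    (hs : 0 < s) (ht : 0 ≤ t) (hf : DiffContOnCl ℂ f (ball c s))
    (hε : ∀ z ∈ sphere c s, |‖z‖ - t| * ‖f z‖ ≤ ε) :
    s * ‖c‖ * ‖f c‖ ≤ (‖c‖ + s + t) * ε := by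
  set q : ℂ → ℂ := fun z => conj c * z * (z - c) + s ^ 2 * z - t ^ 2 * (z - c)
  have hq : DiffContOnCl ℂ q (ball c s) := by
    apply Differentiable.diffContOnCl
    fun_prop
  have hfrontier : ∀ z ∈ frontier (ball c s), ‖q z • f z‖ ≤ s * ((‖c‖ + s + t) * ε) := by
    intro z hz
    rw [frontier_ball c hs.ne'] at hz
    have hzc : ‖z‖ ≤ ‖c‖ + s := by
      have := norm_le_norm_add_norm_sub' z c
      rwa [← dist_eq_norm, mem_sphere.mp hz] at this
    have hfz := hε z hz
    have hε₀ : 0 ≤ ε := (by positivity : 0 ≤ |‖z‖ - t| * ‖f z‖).trans hfz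
    rw [norm_smul, norm_quadratic_eq_mul_abs_norm_sq_sub_sq t hz, sq_sub_sq, abs_mul,
      abs_of_nonneg (by positivity : 0 ≤ ‖z‖ + t), mul_assoc, mul_assoc]
    gcongr s * ?_
    calc (‖z‖ + t) * (|‖z‖ - t| * ‖f z‖) ≤ (‖z‖ + t) * ε := by gcongr
      _ ≤ (‖c‖ + s + t) * ε := by gcongr
  have hcenter := Complex.norm_le_of_forall_mem_frontier_norm_le isBounded_ball (hq.smul hf)
    hfrontier (subset_closure (mem_ball_self hs))
  have hqc : q c = (s : ℂ) ^ 2 * c := by simp [q]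
  rw [hqc, norm_smul, norm_mul, norm_pow, Complex.norm_real, Real.norm_of_nonneg hs.le] at hcenter
  nlinarith

theorem mul_norm_le_of_forall_mem_closedBall {f : ℂ → X} {c : ℂ} {s t ε : ℝ}
    (hs : 0 < s) (hst : s ≤ t) (hf : DifferentiableOn ℂ f (closedBall c s))
    (hε : ∀ z ∈ closedBall c s, |‖z‖ - t| * ‖f z‖ ≤ ε) :
    s * ‖f c‖ ≤ 5 * ε := by
  have hεc := hε c (mem_closedBall_self hs.le)
  have hε₀ : 0 ≤ ε := (by positivity : 0 ≤ |‖c‖ - t| * ‖f c‖).trans hεc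
  rcases lt_or_ge ‖c‖ (t / 2) with hc | hc
  · have hfar : s / 2 ≤ |‖c‖ - t| := by
      rw [abs_sub_comm, abs_of_pos (by linarith)]
      linarith
    nlinarith [norm_nonneg (f c)]
  · have hsphere := mul_norm_mul_norm_le_of_forall_mem_sphere hs (hs.le.trans hst)
      (hf.diffContOnCl_ball subset_rfl) fun z hz => hε z (sphere_subset_closedBall hz)
    have hc₀ : 0 < ‖c‖ := by linarith
    have : ‖c‖ * (s * ‖f c‖) ≤ ‖c‖ * (5 * ε) := by nlinarith
    exact le_of_mul_le_mul_left this hc₀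

theorem hasBishopBeta_of_forall_abs_norm_sub_mul_norm_le {T : X →L[ℂ] X} {t : ℝ} (ht : 0 < t)
    (hT : ∀ (z : ℂ) (x : X), |‖z‖ - t| * ‖x‖ ≤ ‖T x - z • x‖) : HasBishopBeta T := by
  intro U hU f hf hconv K hKU hK
  obtain ⟨δ, hδ, hδU⟩ := hK.exists_thickening_subset_open hU hKU
  set s := min (δ / 2) t
  have hs : 0 < s := lt_min (half_pos hδ) ht
  have hK'U : cthickening s K ⊆ U :=
    (cthickening_subset_thickening' hδ ((min_le_left _ _).trans_lt (half_lt_self hδ)) K).trans hδU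
  rw [Metric.tendstoUniformlyOn_iff]
  intro ε hε
  filter_upwards [Metric.tendstoUniformlyOn_iff.mp (hconv _ hK'U hK.cthickening) (s * ε / 10)
    (by positivity)] with n hn c hc
  have hball : closedBall c s ⊆ cthickening s K := closedBall_subset_cthickening hc s
  have hbound : ∀ z ∈ closedBall c s, |‖z‖ - t| * ‖f n z‖ ≤ s * ε / 10 := fun z hz =>
    (hT z (f n z)).trans (by simpa [dist_eq_norm'] using (hn z (hball hz)).le)
  have := mul_norm_le_of_forall_mem_closedBall hs (min_le_right _ _)
    ((hf n).differentiableOn.mono (hball.trans hK'U)) hbound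
  rw [Pi.zero_apply, dist_zero_left]
  nlinarith

end PropertyBeta

theorem bishopBeta_of_lowerBound_eq_numericalRadius_general (S : H →L[ℂ] H)
    (e : HilbertBasis ℕ ℂ H) (ω : ℕ → ℝ) (hpos : ∀ n, 0 < ω n)
    (hS : ∀ n, S (e n) = (ω n : ℂ) • e (n + 1))
    (h : lowerBound S = numericalRadius S) :
    HasBishopBeta S := by
  have ht : 0 < lowerBound S := by
    have := abs_weight_zero_le_two_mul_numericalRadius e.orthonormal hS
    rw [abs_of_pos (hpos 0)] at this
    linarith [hpos 0]
  exact hasBishopBeta_of_forall_abs_norm_sub_mul_norm_le ht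
    (abs_norm_sub_lowerBound_mul_norm_le h)

/-- If a unilateral weighted shift `S` with positive bounded weights satisfies
`m(S) = w(S)`, then `S` possesses Bishop's property (β). -/
theorem bishopBeta_of_lowerBound_eq_numericalRadius (S : H →L[ℂ] H)
    (e : HilbertBasis ℕ ℂ H) (ω : ℕ → ℝ) (hpos : ∀ n, 0 < ω n)
    (hbd : ∃ M : ℝ, ∀ n, ω n ≤ M)
    (hS : ∀ n, S (e n) = (ω n : ℂ) • e (n + 1))
    (h : lowerBound S = numericalRadius S) :
    HasBishopBeta S :=
  bishopBeta_of_lowerBound_eq_numericalRadius_general S e ω hpos hS h
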